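/- For |q|<1 and w with |w|>|q|, w ∉ {q^{2ℓ+1} : ℓ ∈ ℤ}, the series κ(w;q) := ∑_{n≥0} q^{n+1} w^{-n} (wq²;q²)_n / (wq;q²)_{n+1} evaluated at base q^{-1} equals ψ₂(w^{-1};q)/(1−w), where ψ₂(w;q) := ∑_{n≥0} w^n q^{n(n+1)/2}; that is, ∑_{n≥0} q^{-(n+1)} w^{-n} (wq^{-2};q^{-2})_n / (wq^{-1};q^{-2})_{n+1} = (1/(1−w)) ∑_{n≥0} w^{-n} q^{n(n+1)/2} for |q|<1, |w|>1, w ∉ {q^{2ℓ+1} : ℓ ∈ ℕ₀}. -/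

import Mathlib

noncomputable def qPoch (a q : ℂ) (n : ℕ) : ℂ :=
  ∏ j ∈ Finset.range n, (1 - a * q ^ j)

open Finset Filter Topology

lemma one_sub_ne_zero_of_norm_lt_one {x : ℂ} (h : ‖x‖ < 1) : (1 : ℂ) - x ≠ 0 := by
  intro h0
  have : x = 1 := by linear_combination -h0
  rw [this] at h; simp at h

lemma qPoch_ne_zero {a q : ℂ} (ha : ‖a‖ < 1) (hq : ‖q‖ ≤ 1) (n : ℕ) :
    qPoch a q n ≠ 0 := by
  refine Finset.prod_ne_zero_iff.mpr fun j _ => ?_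
  refine one_sub_ne_zero_of_norm_lt_one ?_
  calc ‖a * q ^ j‖ = ‖a‖ * ‖q‖ ^ j := by rw [norm_mul, norm_pow]
    _ ≤ ‖a‖ * 1 := by
        have : ‖q‖ ^ j ≤ 1 := pow_le_one₀ (norm_nonneg q) hq
        nlinarith [norm_nonneg a]
    _ < 1 := by simpa using ha

lemma qPoch_succ (a q : ℂ) (n : ℕ) :
    qPoch a q (n + 1) = qPoch a q n * (1 - a * q ^ n) := Finset.prod_range_succ _ _

lemma qPoch_succ' (a q : ℂ) (n : ℕ) :
    qPoch a q (n + 1) = (1 - a) * qPoch (a * q) q n := by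
  rw [qPoch, Finset.prod_range_succ']
  simp only [pow_zero, mul_one, qPoch]
  rw [mul_comm]
  congr 1
  refine Finset.prod_congr rfl fun j _ => ?_
  ring

lemma qPoch_zero (a q : ℂ) : qPoch a q 0 = 1 := rfl

lemma qPoch_one (a q : ℂ) : qPoch a q 1 = 1 - a := by simp [qPoch]

noncomputable def cc (q u : ℂ) (n : ℕ) : ℂ :=
  u ^ n * qPoch (u * q ^ 2) (q ^ 2) n / qPoch (u * q) (q ^ 2) (n + 1)

noncomputable def dd (q u : ℂ) (n : ℕ) : ℂ :=
  u ^ n * qPoch (u * q ^ 2) (q ^ 2) n / qPoch (u * q) (q ^ 2) n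

noncomputable def pp (q u : ℂ) (n : ℕ) : ℂ := u ^ n * q ^ (n * (n + 1) / 2)

section main
variable {q u : ℂ} (hq : ‖q‖ < 1) (hu : ‖u‖ < 1)

include hq hu

lemma norm_uq2_lt : ‖u * q ^ 2‖ < 1 := by
  rw [norm_mul, norm_pow]
  have h1 : ‖q‖ ^ 2 ≤ 1 := pow_le_one₀ (norm_nonneg q) hq.le
  nlinarith [norm_nonneg u, norm_nonneg q]

lemma norm_uq_lt : ‖u * q‖ < 1 := by
  rw [norm_mul]
  nlinarith [norm_nonneg u, norm_nonneg q]

lemma den_ne_zero (n : ℕ) : qPoch (u * q) (q ^ 2) n ≠ 0 :=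
  qPoch_ne_zero (norm_uq_lt hq hu) (by rw [norm_pow]; nlinarith [norm_nonneg q]) n

lemma num_ne_zero (n : ℕ) : qPoch (u * q ^ 2) (q ^ 2) n ≠ 0 :=
  qPoch_ne_zero (norm_uq2_lt hq hu) (by rw [norm_pow]; nlinarith [norm_nonneg q]) n

lemma cc_ne_zero (hu0 : u ≠ 0) (n : ℕ) : cc q u n ≠ 0 := by
  have h1 := den_ne_zero hq hu (n + 1)
  have h2 := num_ne_zero hq hu n
  have h3 : u ^ n ≠ 0 := pow_ne_zero _ hu0
  simp only [cc, div_ne_zero_iff, mul_ne_zero_iff]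
  exact ⟨⟨h3, h2⟩, h1⟩

lemma dd_ne_zero (hu0 : u ≠ 0) (n : ℕ) : dd q u n ≠ 0 := by
  have h1 := den_ne_zero hq hu n
  have h2 := num_ne_zero hq hu n
  have h3 : u ^ n ≠ 0 := pow_ne_zero _ hu0
  simp only [dd, div_ne_zero_iff, mul_ne_zero_iff]
  exact ⟨⟨h3, h2⟩, h1⟩

lemma cc_ratio (n : ℕ) :
    cc q u (n + 1) =
      cc q u n * (u * (1 - u * q ^ 2 * (q ^ 2) ^ n) / (1 - u * q * (q ^ 2) ^ (n + 1))) := by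
  have h1 := den_ne_zero hq hu (n + 1)
  have h2 : (1 : ℂ) - u * q * (q ^ 2) ^ (n + 1) ≠ 0 := by
    refine one_sub_ne_zero_of_norm_lt_one ?_
    rw [norm_mul, norm_mul, norm_pow, norm_pow]
    have h3 : ‖q‖ * (‖q‖ ^ 2) ^ (n + 1) ≤ 1 := by
      have := pow_le_one₀ (by positivity : (0:ℝ) ≤ ‖q‖ ^ 2)
        (by nlinarith [norm_nonneg q] : ‖q‖ ^ 2 ≤ 1) (n := n + 1)
      nlinarith [norm_nonneg q, pow_nonneg (by positivity : (0:ℝ) ≤ ‖q‖ ^ 2) (n+1)]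
    nlinarith [norm_nonneg u, mul_nonneg (norm_nonneg q)
      (pow_nonneg (by positivity : (0:ℝ) ≤ ‖q‖ ^ 2) (n+1))]
  rw [cc, cc, qPoch_succ (u * q ^ 2) (q ^ 2) n, qPoch_succ (u * q) (q ^ 2) (n + 1)]
  field_simp
  ring

lemma dd_ratio (n : ℕ) :
    dd q u (n + 1) =
      dd q u n * (u * (1 - u * q ^ 2 * (q ^ 2) ^ n) / (1 - u * q * (q ^ 2) ^ n)) := by
  have h1 := den_ne_zero hq hu n
  have h2 : (1 : ℂ) - u * q * (q ^ 2) ^ n ≠ 0 := by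
    refine one_sub_ne_zero_of_norm_lt_one ?_
    rw [norm_mul, norm_mul, norm_pow, norm_pow]
    have h3 : ‖q‖ * (‖q‖ ^ 2) ^ n ≤ 1 := by
      have := pow_le_one₀ (by positivity : (0:ℝ) ≤ ‖q‖ ^ 2)
        (by nlinarith [norm_nonneg q] : ‖q‖ ^ 2 ≤ 1) (n := n)
      nlinarith [norm_nonneg q, pow_nonneg (by positivity : (0:ℝ) ≤ ‖q‖ ^ 2) n]
    nlinarith [norm_nonneg u, mul_nonneg (norm_nonneg q)
      (pow_nonneg (by positivity : (0:ℝ) ≤ ‖q‖ ^ 2) n)]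
  rw [dd, dd, qPoch_succ (u * q ^ 2) (q ^ 2) n, qPoch_succ (u * q) (q ^ 2) n]
  field_simp
  ring

end main

section main2
variable {q u : ℂ} (hq : ‖q‖ < 1) (hu : ‖u‖ < 1) (hu0 : u ≠ 0)

include hq hu hu0

lemma summable_cc : Summable (cc q u) := by
  refine summable_of_ratio_test_tendsto_lt_one hu
    (Eventually.of_forall (cc_ne_zero hq hu hu0)) ?_
  have hpow : Tendsto (fun n : ℕ => (q ^ 2) ^ n) atTop (𝓝 0) := by
    apply tendsto_pow_atTop_nhds_zero_of_norm_lt_one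
    rw [norm_pow]; nlinarith [norm_nonneg q]
  have hr : Tendsto (fun n : ℕ =>
      u * (1 - u * q ^ 2 * (q ^ 2) ^ n) / (1 - u * q * (q ^ 2) ^ (n + 1))) atTop (𝓝 u) := by
    have h1 : Tendsto (fun n : ℕ => u * (1 - u * q ^ 2 * (q ^ 2) ^ n)) atTop (𝓝 (u * 1)) := by
      refine Tendsto.mul tendsto_const_nhds ?_
      have := (hpow.const_mul (u * q ^ 2)).const_sub (1 : ℂ)
      simpa using this
    have h2 : Tendsto (fun n : ℕ => (1 : ℂ) - u * q * (q ^ 2) ^ (n + 1)) atTop (𝓝 1) := by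
      have hp1 : Tendsto (fun n : ℕ => (q ^ 2) ^ (n + 1)) atTop (𝓝 0) :=
        hpow.comp (tendsto_add_atTop_nat 1)
      have := (hp1.const_mul (u * q)).const_sub (1 : ℂ)
      simpa using this
    have := h1.div h2 (by norm_num)
    rw [mul_one, div_one] at this; exact this
  have : Tendsto (fun n : ℕ => ‖cc q u (n + 1)‖ / ‖cc q u n‖) atTop (𝓝 ‖u‖) := by
    have heq : ∀ n : ℕ, ‖cc q u (n + 1)‖ / ‖cc q u n‖ =
        ‖u * (1 - u * q ^ 2 * (q ^ 2) ^ n) / (1 - u * q * (q ^ 2) ^ (n + 1))‖ := by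
      intro n
      rw [cc_ratio hq hu n, norm_mul, mul_div_assoc]
      rw [mul_comm, div_mul_cancel₀ _ (norm_ne_zero_iff.mpr (cc_ne_zero hq hu hu0 n))]
    simp only [heq]
    exact hr.norm
  exact this

lemma summable_dd : Summable (dd q u) := by
  refine summable_of_ratio_test_tendsto_lt_one hu
    (Eventually.of_forall (dd_ne_zero hq hu hu0)) ?_
  have hpow : Tendsto (fun n : ℕ => (q ^ 2) ^ n) atTop (𝓝 0) := by
    apply tendsto_pow_atTop_nhds_zero_of_norm_lt_one
    rw [norm_pow]; nlinarith [norm_nonneg q]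
  have hr : Tendsto (fun n : ℕ =>
      u * (1 - u * q ^ 2 * (q ^ 2) ^ n) / (1 - u * q * (q ^ 2) ^ n)) atTop (𝓝 u) := by
    have h1 : Tendsto (fun n : ℕ => u * (1 - u * q ^ 2 * (q ^ 2) ^ n)) atTop (𝓝 (u * 1)) := by
      refine Tendsto.mul tendsto_const_nhds ?_
      have := (hpow.const_mul (u * q ^ 2)).const_sub (1 : ℂ)
      simpa using this
    have h2 : Tendsto (fun n : ℕ => (1 : ℂ) - u * q * (q ^ 2) ^ n) atTop (𝓝 1) := by
      have := (hpow.const_mul (u * q)).const_sub (1 : ℂ)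
      simpa using this
    have := h1.div h2 (by norm_num)
    rw [mul_one, div_one] at this; exact this
  have heq : ∀ n : ℕ, ‖dd q u (n + 1)‖ / ‖dd q u n‖ =
      ‖u * (1 - u * q ^ 2 * (q ^ 2) ^ n) / (1 - u * q * (q ^ 2) ^ n)‖ := by
    intro n
    rw [dd_ratio hq hu n, norm_mul, mul_div_assoc]
    rw [mul_comm, div_mul_cancel₀ _ (norm_ne_zero_iff.mpr (dd_ne_zero hq hu hu0 n))]
  simp only [heq]
  exact hr.norm

lemma dd_tendsto_zero : Tendsto (dd q u) atTop (𝓝 0) :=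
  (summable_dd hq hu hu0).tendsto_atTop_zero

end main2

section main3
variable {q u : ℂ} (hq : ‖q‖ < 1) (hu : ‖u‖ < 1)

include hq hu

lemma PT0 : (1 - u) * cc q u 0 = u * q + (dd q u 0 - dd q u 1) := by
  have hne : (1 : ℂ) - u * q * (q ^ 2) ^ 0 ≠ 0 := by
    simpa [qPoch, Finset.prod_range_one] using den_ne_zero hq hu 1
  simp only [cc, dd, qPoch, zero_add, Finset.prod_range_one, Finset.prod_range_zero, pow_zero, one_mul,
    pow_one, mul_one] at *
  field_simp
  ring

lemma PTs (n : ℕ) : (1 - u) * cc q u (n + 1) =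
    u ^ 2 * q ^ 3 * (1 - u * q ^ 2) * cc q (u * q ^ 2) n
      + (dd q u (n + 1) - dd q u (n + 2)) := by
  have huq2 : ‖u * q ^ 2‖ < 1 := norm_uq2_lt hq hu
  have e6 : u * q ^ 2 * q = u * q * q ^ 2 := by ring
  have e1 : qPoch (u * q ^ 2) (q ^ 2) (n + 1)
      = (1 - u * q ^ 2) * qPoch (u * q ^ 2 * q ^ 2) (q ^ 2) n := qPoch_succ' _ _ _
  have e2 : qPoch (u * q) (q ^ 2) (n + 2)
      = (1 - u * q) * (qPoch (u * q * q ^ 2) (q ^ 2) n * (1 - u * q * q ^ 2 * (q ^ 2) ^ n)) := by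
    rw [qPoch_succ' _ _ (n + 1), qPoch_succ]
  have e3 : qPoch (u * q) (q ^ 2) (n + 1)
      = (1 - u * q) * qPoch (u * q * q ^ 2) (q ^ 2) n := qPoch_succ' _ _ _
  have e4 : qPoch (u * q ^ 2) (q ^ 2) (n + 2)
      = (1 - u * q ^ 2) * (qPoch (u * q ^ 2 * q ^ 2) (q ^ 2) n
          * (1 - u * q ^ 2 * q ^ 2 * (q ^ 2) ^ n)) := by
    rw [qPoch_succ' _ _ (n + 1), qPoch_succ]
  have e5 : qPoch (u * q ^ 2 * q) (q ^ 2) (n + 1)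
      = qPoch (u * q * q ^ 2) (q ^ 2) n * (1 - u * q * q ^ 2 * (q ^ 2) ^ n) := by
    rw [e6, qPoch_succ]
  have hne1 : (1 : ℂ) - u * q ≠ 0 := by
    simpa [qPoch, Finset.prod_range_one] using den_ne_zero hq hu 1
  have hne2 : qPoch (u * q * q ^ 2) (q ^ 2) n ≠ 0 := by
    rw [← e6]; exact den_ne_zero hq huq2 n
  have hne3 : (1 : ℂ) - u * q * q ^ 2 * (q ^ 2) ^ n ≠ 0 := by
    have h := den_ne_zero hq huq2 (n + 1)
    rw [e6, qPoch_succ] at h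
    exact right_ne_zero_of_mul h
  have pu2 : u^(n+2) = u^n*u*u := by rw [pow_succ, pow_succ]
  have pu1 : u^(n+1) = u^n*u := pow_succ u n
  simp only [cc, dd, e1, e2, e3, e4, e5, mul_pow, pu2, pu1]
  generalize qPoch (u * q ^ 2 * q ^ 2) (q ^ 2) n = X
  generalize hYv : qPoch (u * q * q ^ 2) (q ^ 2) n = Y at hne2
  generalize hPv : ((q : ℂ) ^ 2) ^ n = P at hne3
  generalize (u : ℂ) ^ n = U
  have hDne : ((1:ℂ)-u*q)*(Y*(1-u*q*q^2*P)) ≠ 0 := mul_ne_zero hne1 (mul_ne_zero hne2 hne3)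
  have t2 : u^2*q^3*(1-u*q^2) * (U*P*X / (Y*(1-u*q*q^2*P)))
      = (u^2*q^3*(1-u*q^2) * (U*P*X) * (1-u*q)) / ((1-u*q)*(Y*(1-u*q*q^2*P))) := by
    rw [← mul_div_assoc,
      ← mul_div_mul_right (u^2*q^3*(1-u*q^2) * (U*P*X)) (Y*(1-u*q*q^2*P)) hne1]
    congr 1
    ring
  have t3 : U*u*((1-u*q^2)*X)/((1-u*q)*Y)
      = (U*u*((1-u*q^2)*X)*(1-u*q*q^2*P)) / ((1-u*q)*(Y*(1-u*q*q^2*P))) := by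
    rw [← mul_div_mul_right (U*u*((1-u*q^2)*X)) ((1-u*q)*Y) hne3]
    congr 1
    ring
  rw [t2, t3, ← mul_div_assoc, div_sub_div_same, ← add_div]
  rw [div_eq_div_iff hDne hDne]
  ring
end main3

section main4
variable {q u : ℂ} (hq : ‖q‖ < 1) (hq0 : q ≠ 0) (hu : ‖u‖ < 1) (hu0 : u ≠ 0)

include hq hq0 hu hu0

lemma funeq_F :
    (1 - u) * ∑' n, cc q u n
      = 1 + u * q + u ^ 2 * q ^ 3 * (1 - u * q ^ 2) * ∑' n, cc q (u * q ^ 2) n := by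
  have huq2 : ‖u * q ^ 2‖ < 1 := norm_uq2_lt hq hu
  have huq20 : u * q ^ 2 ≠ 0 := mul_ne_zero hu0 (pow_ne_zero _ hq0)
  have hS : Summable (cc q u) := summable_cc hq hu hu0
  have hS2 : Summable (cc q (u * q ^ 2)) := summable_cc hq huq2 huq20
  set t : ℕ → ℂ := fun n =>
    Nat.casesOn n (u * q) (fun m => u ^ 2 * q ^ 3 * (1 - u * q ^ 2) * cc q (u * q ^ 2) m)
    with ht_def
  have ht : Summable t := by
    have h1 : Summable (fun n => t (n + 1)) := by
      simpa [ht_def] using hS2.mul_left (u ^ 2 * q ^ 3 * (1 - u * q ^ 2))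
    exact (summable_nat_add_iff 1).mp h1
  have per : ∀ n, (1 - u) * cc q u n = t n + (dd q u n - dd q u (n + 1)) := by
    intro n
    cases n with
    | zero => simpa [ht_def] using PT0 hq hu
    | succ m => simpa [ht_def] using PTs hq hu m
  have key : ∀ N, ∑ n ∈ range N, (1 - u) * cc q u n
      = (∑ n ∈ range N, t n) + (dd q u 0 - dd q u N) := by
    intro N
    rw [← Finset.sum_range_sub' (dd q u) N, ← Finset.sum_add_distrib]
    exact Finset.sum_congr rfl fun n _ => per n
  have hL : Tendsto (fun N => ∑ n ∈ range N, (1 - u) * cc q u n) atTop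
      (𝓝 ((1 - u) * ∑' n, cc q u n)) := (hS.hasSum.mul_left (1 - u)).tendsto_sum_nat
  have hR : Tendsto (fun N => (∑ n ∈ range N, t n) + (dd q u 0 - dd q u N)) atTop
      (𝓝 ((∑' n, t n) + (dd q u 0 - 0))) :=
    ht.hasSum.tendsto_sum_nat.add (tendsto_const_nhds.sub (dd_tendsto_zero hq hu hu0))
  have heq : (1 - u) * ∑' n, cc q u n = (∑' n, t n) + (dd q u 0 - 0) := by
    refine tendsto_nhds_unique ?_ hR
    simpa only [key] using hL
  have htsum : (∑' n, t n)
      = u * q + u ^ 2 * q ^ 3 * (1 - u * q ^ 2) * ∑' n, cc q (u * q ^ 2) n := by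
    rw [Summable.tsum_eq_zero_add ht]
    simp only [ht_def]
    rw [tsum_mul_left]
    rfl
  have hdd0 : dd q u 0 = 1 := by simp [dd, qPoch]
  rw [heq, htsum, hdd0]
  ring

end main4

lemma summable_pp {q u : ℂ} (hq : ‖q‖ < 1) (hu : ‖u‖ < 1) : Summable (pp q u) := by
  refine Summable.of_norm_bounded (g := fun n => ‖u‖ ^ n)
    (summable_geometric_of_lt_one (norm_nonneg u) hu) fun n => ?_
  rw [pp, norm_mul, norm_pow, norm_pow]
  have h1 : ‖q‖ ^ (n * (n + 1) / 2) ≤ 1 := pow_le_one₀ (norm_nonneg q) hq.le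
  nlinarith [pow_nonneg (norm_nonneg u) n]

lemma pp_shift (q u : ℂ) (n : ℕ) : pp q u (n + 2) = u ^ 2 * q ^ 3 * pp q (u * q ^ 2) n := by
  obtain ⟨k, hk⟩ := Nat.even_mul_succ_self n
  have he : (n + 2) * (n + 3) = n * (n + 1) + (4 * n + 6) := by ring
  have h1 : (n + 2) * ((n + 2) + 1) / 2 = n * (n + 1) / 2 + (2 * n + 3) := by
    rw [show (n + 2) + 1 = n + 3 from rfl, he, hk]
    omega
  simp only [pp]
  rw [h1]
  generalize n * (n + 1) / 2 = T
  rw [pow_add, mul_pow]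
  ring

set_option maxHeartbeats 1000000 in
lemma funeq_pp {q u : ℂ} (hq : ‖q‖ < 1) (hu : ‖u‖ < 1) :
    ∑' n, pp q u n = 1 + u * q + u ^ 2 * q ^ 3 * ∑' n, pp q (u * q ^ 2) n := by
  have hs := summable_pp hq hu
  have hs1 : Summable (fun n => pp q u (n + 1)) := (summable_nat_add_iff 1).mpr hs
  have hs2 : Summable (fun n => pp q u (n + 1 + 1)) := (summable_nat_add_iff 1).mpr hs1
  rw [Summable.tsum_eq_zero_add hs, Summable.tsum_eq_zero_add hs1]
  have h2 : ∑' n, pp q u (n + 1 + 1) = u ^ 2 * q ^ 3 * ∑' n, pp q (u * q ^ 2) n := by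
    rw [← tsum_mul_left]
    exact tsum_congr fun n => pp_shift q u n
  rw [h2]
  have h0 : pp q u 0 = 1 := by simp [pp]
  have h1 : pp q u 1 = u * q := by simp [pp]
  rw [h0, h1]
  ring

lemma prod_one_sub_ge (a : ℕ → ℝ) (h0 : ∀ j, 0 ≤ a j) (h1 : ∀ j, a j ≤ 1) (n : ℕ) :
    1 - ∑ j ∈ range n, a j ≤ ∏ j ∈ range n, (1 - a j) := by
  induction n with
  | zero => simp
  | succ m ih =>
    rw [Finset.prod_range_succ, Finset.sum_range_succ]
    have hS : 0 ≤ ∑ j ∈ range m, a j := Finset.sum_nonneg fun j _ => h0 j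
    nlinarith [h0 m, h1 m, ih]

lemma prod_one_add_le (a : ℕ → ℝ) (h0 : ∀ j, 0 ≤ a j) (h1 : ∀ j, a j ≤ 1) (n : ℕ) :
    (∏ j ∈ range n, (1 + a j)) * (1 - ∑ j ∈ range n, a j) ≤ 1 := by
  induction n with
  | zero => simp
  | succ m ih =>
    rw [Finset.prod_range_succ, Finset.sum_range_succ]
    have hS : 0 ≤ ∑ j ∈ range m, a j := Finset.sum_nonneg fun j _ => h0 j
    have hQ : (0:ℝ) ≤ ∏ j ∈ range m, (1 + a j) :=
      Finset.prod_nonneg fun j _ => by nlinarith [h0 j]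
    have step : (1 + a m) * (1 - (∑ j ∈ range m, a j + a m)) ≤ 1 - ∑ j ∈ range m, a j := by
      nlinarith [h0 m, h1 m]
    calc (∏ j ∈ range m, (1 + a j)) * (1 + a m) * (1 - (∑ j ∈ range m, a j + a m))
        = (∏ j ∈ range m, (1 + a j)) * ((1 + a m) * (1 - (∑ j ∈ range m, a j + a m))) := by ring
      _ ≤ (∏ j ∈ range m, (1 + a j)) * (1 - ∑ j ∈ range m, a j) :=
          mul_le_mul_of_nonneg_left step hQ
      _ ≤ 1 := ih

section bounds
variable {q u : ℂ} (hq : ‖q‖ < 1) (hu2 : ‖u‖ ≤ (1 - ‖q‖) / 2)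

include hq hu2

lemma geom_half (r : ℕ → ℕ) (hr : ∀ j, j ≤ r j) (n : ℕ) :
    ∑ j ∈ range n, ‖u‖ * ‖q‖ ^ (r j) ≤ 1 / 2 := by
  have h0 : (0:ℝ) ≤ ‖q‖ := norm_nonneg q
  have hgeom : ∑ j ∈ range n, ‖q‖ ^ j ≤ (1 - ‖q‖)⁻¹ := by
    have := Summable.sum_le_tsum (range n) (fun i _ => pow_nonneg h0 i)
      (summable_geometric_of_lt_one h0 hq)
    rwa [tsum_geometric_of_lt_one h0 hq] at this
  have hterm : ∀ j ∈ range n, ‖u‖ * ‖q‖ ^ (r j) ≤ ‖u‖ * ‖q‖ ^ j := by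
    intro j _
    exact mul_le_mul_of_nonneg_left (pow_le_pow_of_le_one h0 hq.le (hr j)) (norm_nonneg u)
  calc ∑ j ∈ range n, ‖u‖ * ‖q‖ ^ (r j) ≤ ∑ j ∈ range n, ‖u‖ * ‖q‖ ^ j :=
        Finset.sum_le_sum hterm
    _ = ‖u‖ * ∑ j ∈ range n, ‖q‖ ^ j := by rw [Finset.mul_sum]
    _ ≤ ((1 - ‖q‖) / 2) * (1 - ‖q‖)⁻¹ := by
        refine mul_le_mul hu2 hgeom (Finset.sum_nonneg fun i _ => pow_nonneg h0 i) ?_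
        nlinarith
    _ = 1 / 2 := by
        rw [div_mul_eq_mul_div, mul_inv_cancel₀ (by nlinarith : (1:ℝ) - ‖q‖ ≠ 0)]

omit hq hu2 in
lemma norm_factor_den (j : ℕ) : ‖u * q * (q ^ 2 : ℂ) ^ j‖ = ‖u‖ * ‖q‖ ^ (2 * j + 1) := by
  rw [norm_mul, norm_mul, norm_pow, norm_pow, pow_add, pow_mul]
  ring

omit hq hu2 in
lemma norm_factor_num (j : ℕ) : ‖u * q ^ 2 * (q ^ 2 : ℂ) ^ j‖ = ‖u‖ * ‖q‖ ^ (2 * j + 2) := by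
  rw [norm_mul, norm_mul, norm_pow, norm_pow, norm_pow, pow_add, pow_mul]
  ring

lemma den_lower (n : ℕ) : 1 / 2 ≤ ‖qPoch (u * q) (q ^ 2) n‖ := by
  have ha0 : ∀ j, 0 ≤ ‖u‖ * ‖q‖ ^ (2 * j + 1) := fun j => by positivity
  have ha1 : ∀ j, ‖u‖ * ‖q‖ ^ (2 * j + 1) ≤ 1 := by
    intro j
    have h1 : ‖q‖ ^ (2 * j + 1) ≤ 1 := pow_le_one₀ (norm_nonneg q) hq.le
    nlinarith [norm_nonneg u, norm_nonneg q, pow_nonneg (norm_nonneg q) (2*j+1)]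
  have hP : ‖qPoch (u * q) (q ^ 2) n‖ = ∏ j ∈ range n, ‖1 - u * q * (q ^ 2 : ℂ) ^ j‖ := by
    rw [qPoch, norm_prod]
  rw [hP]
  have h1 : ∏ j ∈ range n, (1 - ‖u‖ * ‖q‖ ^ (2 * j + 1))
      ≤ ∏ j ∈ range n, ‖1 - u * q * (q ^ 2 : ℂ) ^ j‖ := by
    refine Finset.prod_le_prod (fun j _ => ?_) (fun j _ => ?_)
    · have := geom_half hq hu2 (fun j => 2 * j + 1) (fun j => by show j ≤ 2 * j + 1; omega) (j + 1)
      have h2 : ‖u‖ * ‖q‖ ^ (2 * j + 1) ≤ ∑ i ∈ range (j + 1), ‖u‖ * ‖q‖ ^ (2 * i + 1) :=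
        Finset.single_le_sum (f := fun i => ‖u‖ * ‖q‖ ^ (2 * i + 1))
          (fun i _ => ha0 i) (Finset.self_mem_range_succ j)
      linarith
    · have := norm_sub_norm_le (1 : ℂ) (u * q * (q ^ 2 : ℂ) ^ j)
      rw [norm_one, norm_factor_den (q := q) (u := u) j] at this
      linarith
  have h2 := prod_one_sub_ge (fun j => ‖u‖ * ‖q‖ ^ (2 * j + 1)) ha0 ha1 n
  have h3 := geom_half hq hu2 (fun j => 2 * j + 1) (fun j => by show j ≤ 2 * j + 1; omega) n
  linarith

lemma num_upper (n : ℕ) : ‖qPoch (u * q ^ 2) (q ^ 2) n‖ ≤ 2 := by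
  have ha0 : ∀ j, 0 ≤ ‖u‖ * ‖q‖ ^ (2 * j + 2) := fun j => by positivity
  have ha1 : ∀ j, ‖u‖ * ‖q‖ ^ (2 * j + 2) ≤ 1 := by
    intro j
    have h1 : ‖q‖ ^ (2 * j + 2) ≤ 1 := pow_le_one₀ (norm_nonneg q) hq.le
    nlinarith [norm_nonneg u, norm_nonneg q, pow_nonneg (norm_nonneg q) (2*j+2)]
  have hP : ‖qPoch (u * q ^ 2) (q ^ 2) n‖ = ∏ j ∈ range n, ‖1 - u * q ^ 2 * (q ^ 2 : ℂ) ^ j‖ := by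
    rw [qPoch, norm_prod]
  rw [hP]
  have h1 : ∏ j ∈ range n, ‖1 - u * q ^ 2 * (q ^ 2 : ℂ) ^ j‖
      ≤ ∏ j ∈ range n, (1 + ‖u‖ * ‖q‖ ^ (2 * j + 2)) := by
    refine Finset.prod_le_prod (fun j _ => norm_nonneg _) (fun j _ => ?_)
    have := norm_sub_le (1 : ℂ) (u * q ^ 2 * (q ^ 2 : ℂ) ^ j)
    rw [norm_one, norm_factor_num (q := q) (u := u) j] at this
    linarith
  have h2 := prod_one_add_le (fun j => ‖u‖ * ‖q‖ ^ (2 * j + 2)) ha0 ha1 n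
  have h3 := geom_half hq hu2 (fun j => 2 * j + 2) (fun j => by show j ≤ 2 * j + 2; omega) n
  have hQ0 : (0:ℝ) ≤ ∏ j ∈ range n, (1 + ‖u‖ * ‖q‖ ^ (2 * j + 2)) :=
    Finset.prod_nonneg fun j _ => by positivity
  nlinarith

lemma cc_bound (n : ℕ) : ‖cc q u n‖ ≤ 4 * ‖u‖ ^ n := by
  have hden := den_lower hq hu2 (n + 1)
  have hnum := num_upper hq hu2 n
  rw [cc, norm_div, norm_mul, norm_pow]
  rw [div_le_iff₀ (by linarith : (0:ℝ) < ‖qPoch (u * q) (q ^ 2) (n+1)‖)]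
  have h0 : (0:ℝ) ≤ ‖u‖ ^ n := pow_nonneg (norm_nonneg u) n
  nlinarith [norm_nonneg (qPoch (u * q ^ 2) (q ^ 2) n)]

lemma u_le_half : ‖u‖ ≤ 1 / 2 := by nlinarith [norm_nonneg q]

lemma F_bound : ‖∑' n, cc q u n‖ ≤ 8 := by
  have hu : ‖u‖ < 1 := lt_of_le_of_lt (u_le_half hq hu2) (by norm_num)
  have hsn : Summable (fun n => ‖cc q u n‖) := by
    refine Summable.of_nonneg_of_le (fun n => norm_nonneg _) (cc_bound hq hu2) ?_
    exact (summable_geometric_of_lt_one (norm_nonneg u) hu).mul_left 4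
  calc ‖∑' n, cc q u n‖ ≤ ∑' n, ‖cc q u n‖ := norm_tsum_le_tsum_norm hsn
    _ ≤ ∑' n, 4 * ‖u‖ ^ n := by
        exact Summable.tsum_le_tsum (cc_bound hq hu2) hsn
          ((summable_geometric_of_lt_one (norm_nonneg u) hu).mul_left 4)
    _ = 4 * (1 - ‖u‖)⁻¹ := by
        rw [tsum_mul_left, tsum_geometric_of_lt_one (norm_nonneg u) hu]
    _ ≤ 8 := by
        have h1 : ‖u‖ ≤ 1/2 := u_le_half hq hu2
        have h2 : (1 - ‖u‖)⁻¹ ≤ 2 := by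
          rw [inv_le_comm₀ (by linarith) (by norm_num)]
          linarith
        linarith

lemma Psi_bound : ‖∑' n, pp q u n‖ ≤ 2 := by
  have hu : ‖u‖ < 1 := lt_of_le_of_lt (u_le_half hq hu2) (by norm_num)
  have hb : ∀ n, ‖pp q u n‖ ≤ ‖u‖ ^ n := by
    intro n
    rw [pp, norm_mul, norm_pow, norm_pow]
    have h1 : ‖q‖ ^ (n * (n + 1) / 2) ≤ 1 := pow_le_one₀ (norm_nonneg q) hq.le
    nlinarith [pow_nonneg (norm_nonneg u) n]
  have hsn : Summable (fun n => ‖pp q u n‖) :=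
    Summable.of_nonneg_of_le (fun n => norm_nonneg _) hb
      (summable_geometric_of_lt_one (norm_nonneg u) hu)
  calc ‖∑' n, pp q u n‖ ≤ ∑' n, ‖pp q u n‖ := norm_tsum_le_tsum_norm hsn
    _ ≤ ∑' n, ‖u‖ ^ n :=
        Summable.tsum_le_tsum hb hsn (summable_geometric_of_lt_one (norm_nonneg u) hu)
    _ = (1 - ‖u‖)⁻¹ := tsum_geometric_of_lt_one (norm_nonneg u) hu
    _ ≤ 2 := by
        have h1 : ‖u‖ ≤ 1/2 := u_le_half hq hu2
        rw [inv_le_comm₀ (by linarith) (by norm_num)]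
        linarith

end bounds

noncomputable def Hfun (q u : ℂ) : ℂ := (1 - u) * (∑' n, cc q u n) - ∑' n, pp q u n

section conclude
variable {q z : ℂ} (hq : ‖q‖ < 1) (hq0 : q ≠ 0) (hz : ‖z‖ < 1) (hz0 : z ≠ 0)

include hq hq0

lemma H_step {u : ℂ} (hu : ‖u‖ < 1) (hu0 : u ≠ 0) :
    Hfun q u = u ^ 2 * q ^ 3 * Hfun q (u * q ^ 2) := by
  unfold Hfun
  rw [funeq_F hq hq0 hu hu0, funeq_pp hq hu]
  ring

include hz hz0

lemma norm_zq_pow (K : ℕ) : ‖z * q ^ (2 * K)‖ < 1 := by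
  rw [norm_mul, norm_pow]
  have h1 : ‖q‖ ^ (2 * K) ≤ 1 := pow_le_one₀ (norm_nonneg q) hq.le
  nlinarith [norm_nonneg z, pow_nonneg (norm_nonneg q) (2 * K)]

lemma H_iter (K : ℕ) :
    Hfun q z = (∏ k ∈ range K, (z * q ^ (2 * k)) ^ 2 * q ^ 3) * Hfun q (z * q ^ (2 * K)) := by
  induction K with
  | zero => simp
  | succ m ih =>
    rw [Finset.prod_range_succ, ih,
      H_step hq hq0 (norm_zq_pow hq hq0 hz hz0 m) (mul_ne_zero hz0 (pow_ne_zero _ hq0))]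
    have harg : z * q ^ (2 * m) * q ^ 2 = z * q ^ (2 * (m + 1)) := by
      rw [mul_assoc, ← pow_add]
      congr 1
    rw [harg]
    ring

lemma prefac_bound (K : ℕ) :
    ‖∏ k ∈ range K, (z * q ^ (2 * k)) ^ 2 * q ^ 3‖ ≤ ‖z‖ ^ (2 * K) := by
  rw [norm_prod]
  have h1 : ∀ k ∈ range K, ‖(z * q ^ (2 * k)) ^ 2 * q ^ 3‖ ≤ ‖z‖ ^ 2 := by
    intro k _
    rw [norm_mul, norm_pow, norm_mul, norm_pow, norm_pow]
    have hq1 : ‖q‖ ^ (2 * k) ≤ 1 := pow_le_one₀ (norm_nonneg q) hq.le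
    have hq3 : ‖q‖ ^ 3 ≤ 1 := pow_le_one₀ (norm_nonneg q) hq.le
    have hzq : ‖z‖ * ‖q‖ ^ (2 * k) ≤ ‖z‖ := by
      nlinarith [norm_nonneg z, pow_nonneg (norm_nonneg q) (2 * k)]
    have h2 : (‖z‖ * ‖q‖ ^ (2 * k)) ^ 2 ≤ ‖z‖ ^ 2 := by
      nlinarith [norm_nonneg z, mul_nonneg (norm_nonneg z) (pow_nonneg (norm_nonneg q) (2 * k))]
    nlinarith [pow_nonneg (mul_nonneg (norm_nonneg z) (pow_nonneg (norm_nonneg q) (2 * k))) 2,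
      pow_nonneg (norm_nonneg q) 3]
  calc ∏ k ∈ range K, ‖(z * q ^ (2 * k)) ^ 2 * q ^ 3‖
      ≤ ∏ k ∈ range K, ‖z‖ ^ 2 :=
        Finset.prod_le_prod (fun k _ => norm_nonneg _) h1
    _ = ‖z‖ ^ (2 * K) := by rw [Finset.prod_const, Finset.card_range, ← pow_mul, mul_comm]

lemma H_zero : Hfun q z = 0 := by
  set δ : ℝ := (1 - ‖q‖) / 2 with hδ
  have hδ0 : 0 < δ := by rw [hδ]; linarith
  have hδh : δ ≤ 1 / 2 := by rw [hδ]; nlinarith [norm_nonneg q]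
  -- eventually the argument is small
  have htend : Tendsto (fun K : ℕ => ‖z‖ * ‖q‖ ^ (2 * K)) atTop (𝓝 0) := by
    have h1 : Tendsto (fun K : ℕ => ‖q‖ ^ (2 * K)) atTop (𝓝 0) := by
      have h2 : Tendsto (fun K : ℕ => (‖q‖ ^ 2) ^ K) atTop (𝓝 0) :=
        tendsto_pow_atTop_nhds_zero_of_lt_one (by positivity)
          (by nlinarith [norm_nonneg q])
      simpa [← pow_mul, mul_comm] using h2
    simpa using h1.const_mul ‖z‖
  have hev : ∀ᶠ K : ℕ in atTop, ‖z * q ^ (2 * K)‖ ≤ δ := by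
    filter_upwards [htend.eventually_le_const hδ0] with K hK
    rw [norm_mul, norm_pow]
    exact hK
  -- bound
  have hbound : ∀ᶠ K : ℕ in atTop, ‖Hfun q z‖ ≤ 18 * ‖z‖ ^ (2 * K) := by
    filter_upwards [hev] with K hK
    have hu2 : ‖z * q ^ (2 * K)‖ ≤ (1 - ‖q‖) / 2 := hK
    have hHK : ‖Hfun q (z * q ^ (2 * K))‖ ≤ 18 := by
      unfold Hfun
      have hF := F_bound hq hu2
      have hP := Psi_bound hq hu2
      have hone : ‖(1 : ℂ) - z * q ^ (2 * K)‖ ≤ 2 := by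
        have := norm_sub_le (1 : ℂ) (z * q ^ (2 * K))
        rw [norm_one] at this
        have : ‖z * q ^ (2 * K)‖ ≤ 1 / 2 := le_trans hK hδh
        calc ‖(1 : ℂ) - z * q ^ (2 * K)‖ ≤ 1 + ‖z * q ^ (2 * K)‖ :=
              by simpa using norm_sub_le (1 : ℂ) (z * q ^ (2 * K))
          _ ≤ 2 := by linarith
      calc ‖(1 - z * q ^ (2 * K)) * (∑' n, cc q (z * q ^ (2 * K)) n)
              - ∑' n, pp q (z * q ^ (2 * K)) n‖
          ≤ ‖(1 - z * q ^ (2 * K)) * (∑' n, cc q (z * q ^ (2 * K)) n)‖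
            + ‖∑' n, pp q (z * q ^ (2 * K)) n‖ := norm_sub_le _ _
        _ ≤ 2 * 8 + 2 := by
            have h3 : ‖(1 - z * q ^ (2 * K)) * ∑' n, cc q (z * q ^ (2 * K)) n‖ ≤ 2 * 8 := by
              rw [norm_mul]
              exact mul_le_mul hone hF (norm_nonneg _) (by norm_num)
            linarith
        _ = 18 := by norm_num
    calc ‖Hfun q z‖ = ‖(∏ k ∈ range K, (z * q ^ (2 * k)) ^ 2 * q ^ 3)
            * Hfun q (z * q ^ (2 * K))‖ := by rw [← H_iter hq hq0 hz hz0 K]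
      _ ≤ ‖z‖ ^ (2 * K) * 18 := by
          rw [norm_mul]
          exact mul_le_mul (prefac_bound hq hq0 hz hz0 K) hHK (norm_nonneg _)
            (pow_nonneg (norm_nonneg z) _)
      _ = 18 * ‖z‖ ^ (2 * K) := by ring
  have hlim : Tendsto (fun K : ℕ => 18 * ‖z‖ ^ (2 * K)) atTop (𝓝 0) := by
    have h2 : Tendsto (fun K : ℕ => (‖z‖ ^ 2) ^ K) atTop (𝓝 0) :=
      tendsto_pow_atTop_nhds_zero_of_lt_one (by positivity) (by nlinarith [norm_nonneg z])
    have h3 : Tendsto (fun K : ℕ => ‖z‖ ^ (2 * K)) atTop (𝓝 0) := by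
      simpa [← pow_mul, mul_comm] using h2
    simpa using h3.const_mul (18 : ℝ)
  have : ‖Hfun q z‖ ≤ 0 := ge_of_tendsto hlim hbound
  simpa using le_antisymm this (norm_nonneg _)

end conclude

lemma inv_den_ne {w q : ℂ} (hq : ‖q‖ < 1) (hq0 : q ≠ 0) (hw : 1 < ‖w‖) (m : ℕ) :
    qPoch (w * q⁻¹) ((q ^ 2)⁻¹) m ≠ 0 := by
  refine Finset.prod_ne_zero_iff.mpr fun j _ => ?_
  intro h0
  have hx : w * q⁻¹ * ((q ^ 2)⁻¹) ^ j = 1 := by linear_combination -h0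
  have hw' : w = q * (q ^ 2) ^ j := by
    have hq2 : ((q : ℂ) ^ 2) ^ j ≠ 0 := pow_ne_zero _ (pow_ne_zero _ hq0)
    field_simp at hx
    linear_combination (q ^ 2) ^ j * hx - w * mul_inv_cancel₀ hq2
  have hn : ‖w‖ = ‖q‖ * ‖q‖ ^ (2 * j) := by
    rw [hw', norm_mul, norm_pow, norm_pow, ← pow_mul]
  have h1 : ‖q‖ ^ (2 * j) ≤ 1 := pow_le_one₀ (norm_nonneg q) hq.le
  nlinarith [norm_nonneg q, pow_nonneg (norm_nonneg q) (2 * j)]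

lemma term_transform' {w q : ℂ} (hq0 : q ≠ 0) (hw0 : w ≠ 0) (n : ℕ) :
    (q⁻¹) ^ (n + 1) * (w ^ n)⁻¹ * qPoch (w * (q ^ 2)⁻¹) ((q ^ 2)⁻¹) n
        * qPoch (w⁻¹ * q) (q ^ 2) (n + 1)
      = -(w⁻¹) ^ (n + 1) * qPoch (w⁻¹ * q ^ 2) (q ^ 2) n
        * qPoch (w * q⁻¹) ((q ^ 2)⁻¹) (n + 1) := by
  induction n with
  | zero =>
    rw [qPoch_zero, qPoch_zero, qPoch_one, qPoch_one]
    simp only [pow_one, pow_zero, inv_one, one_mul, mul_one]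
    field_simp
    rw [zero_add, pow_one, pow_one, mul_one_div_cancel hq0, mul_one_div_cancel hw0]; ring
  | succ n ih =>
    have hX : ((q : ℂ) ^ 2) ^ n ≠ 0 := pow_ne_zero _ (pow_ne_zero _ hq0)
    have key : q⁻¹ * (1 - w * (q ^ 2)⁻¹ * ((q ^ 2)⁻¹) ^ n)
          * (1 - w⁻¹ * q * (q ^ 2) ^ (n + 1))
        = (1 - w⁻¹ * q ^ 2 * (q ^ 2) ^ n) * (1 - w * q⁻¹ * ((q ^ 2)⁻¹) ^ (n + 1)) := by
      rw [pow_succ ((q : ℂ) ^ 2) n, inv_pow, inv_pow, pow_succ ((q : ℂ) ^ 2) n]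
      field_simp
      ring
    rw [qPoch_succ (w * (q ^ 2)⁻¹) _ n, qPoch_succ (w⁻¹ * q) _ (n + 1),
      qPoch_succ (w⁻¹ * q ^ 2) _ n, qPoch_succ (w * q⁻¹) _ (n + 1)]
    have expand : (q⁻¹) ^ (n + 1 + 1) * (w ^ (n + 1))⁻¹
          * (qPoch (w * (q ^ 2)⁻¹) ((q ^ 2)⁻¹) n * (1 - w * (q ^ 2)⁻¹ * ((q ^ 2)⁻¹) ^ n))
          * (qPoch (w⁻¹ * q) (q ^ 2) (n + 1) * (1 - w⁻¹ * q * (q ^ 2) ^ (n + 1)))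
        = (q⁻¹ * w⁻¹ * (1 - w * (q ^ 2)⁻¹ * ((q ^ 2)⁻¹) ^ n)
            * (1 - w⁻¹ * q * (q ^ 2) ^ (n + 1)))
          * ((q⁻¹) ^ (n + 1) * (w ^ n)⁻¹ * qPoch (w * (q ^ 2)⁻¹) ((q ^ 2)⁻¹) n
            * qPoch (w⁻¹ * q) (q ^ 2) (n + 1)) := by
      ring
    rw [expand, ih]
    linear_combination (-(w⁻¹) ^ (n + 1) * w⁻¹ * qPoch (w⁻¹ * q ^ 2) (q ^ 2) n
      * qPoch (w * q⁻¹) ((q ^ 2)⁻¹) (n + 1)) * key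

theorem kappa_inverse (w q : ℂ) (hq : ‖q‖ < 1) (hq0 : q ≠ 0) (hw : 1 < ‖w‖)
    (hw' : ∀ ℓ : ℕ, w ≠ q ^ (2 * ℓ + 1)) :
    ∑' n : ℕ, (q⁻¹) ^ (n + 1) * (w ^ n)⁻¹ * qPoch (w * (q ^ 2)⁻¹) ((q ^ 2)⁻¹) n
        / qPoch (w * q⁻¹) ((q ^ 2)⁻¹) (n + 1)
      = 1 / (1 - w) * ∑' n : ℕ, (w ^ n)⁻¹ * q ^ (n * (n + 1) / 2) := by
  have hw0 : w ≠ 0 := by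
    intro h; rw [h] at hw; simp at hw; linarith
  have hz : ‖w⁻¹‖ < 1 := by
    rw [norm_inv]
    exact inv_lt_one_of_one_lt₀ hw
  have hz0 : w⁻¹ ≠ 0 := inv_ne_zero hw0
  -- termwise transformation
  have hterm : ∀ n : ℕ, (q⁻¹) ^ (n + 1) * (w ^ n)⁻¹ * qPoch (w * (q ^ 2)⁻¹) ((q ^ 2)⁻¹) n
        / qPoch (w * q⁻¹) ((q ^ 2)⁻¹) (n + 1)
      = (-w⁻¹) * cc q w⁻¹ n := by
    intro n
    have hD2 : qPoch (w * q⁻¹) ((q ^ 2)⁻¹) (n + 1) ≠ 0 := inv_den_ne hq hq0 hw (n + 1)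
    have hD1 : qPoch (w⁻¹ * q) (q ^ 2) (n + 1) ≠ 0 := den_ne_zero hq hz (n + 1)
    have h1 : (-w⁻¹) * cc q w⁻¹ n
        = (-(w⁻¹) ^ (n + 1) * qPoch (w⁻¹ * q ^ 2) (q ^ 2) n)
          / qPoch (w⁻¹ * q) (q ^ 2) (n + 1) := by
      rw [cc, ← mul_div_assoc]
      congr 1
      ring
    rw [h1, div_eq_div_iff hD2 hD1]
    linear_combination term_transform' hq0 hw0 n
  rw [tsum_congr hterm, tsum_mul_left]
  -- rewrite RHS summand as pp
  have hpp : ∀ n : ℕ, (w ^ n)⁻¹ * q ^ (n * (n + 1) / 2) = pp q w⁻¹ n := by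
    intro n
    rw [pp, inv_pow]
  rw [tsum_congr hpp]
  -- use H_zero
  have hH : Hfun q w⁻¹ = 0 := H_zero hq hq0 hz hz0
  have hFP : (1 - w⁻¹) * (∑' n, cc q w⁻¹ n) = ∑' n, pp q w⁻¹ n := by
    have := sub_eq_zero.mp hH
    exact this
  rw [← hFP]
  have h1w : (1 : ℂ) - w ≠ 0 := by
    intro h
    have : w = 1 := by linear_combination -h
    rw [this] at hw; simp at hw
  have hzw : w * w⁻¹ = 1 := mul_inv_cancel₀ hw0
  rw [div_mul_eq_mul_div, eq_div_iff h1w]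
  linear_combination (∑' n, cc q w⁻¹ n) * hzw
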